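/- The theory T has the independence property (IP): there is an L-formula φ(v; w) and, in some model of T, tuples (a_i)_{i ∈ ℕ} and (b_S)_{S ⊆ ℕ} such that φ(a_i; b_S) holds if and only if i ∈ S. -/

import Mathlib

open FirstOrder FirstOrder.Language

namespace BPPaper

/-- The function symbols of the four-sorted language `L`, implemented one-sortedly:
constants `g_T`, `r` (tree sort), `g_L`, `0` (level sort); unary functions
`pred_T`, `pred_L`, the level maps `ℓ_T`, `ℓ_A`, `ℓ_B`; binary functions
`⊓` (the meet of the tree) and `f : A × B → T`. -/
inductive TFunc : ℕ → Type
  | gT : TFunc 0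
  | root : TFunc 0
  | gL : TFunc 0
  | zero : TFunc 0
  | predT : TFunc 1
  | predL : TFunc 1
  | ellT : TFunc 1
  | ellA : TFunc 1
  | ellB : TFunc 1
  | meet : TFunc 2
  | app : TFunc 2

/-- The relation symbols of `L`: unary predicates carving out the four sorts
`A`, `B`, `T`, `L`, and the two orders `≤_T` and `≤_L`. -/
inductive TRel : ℕ → Type
  | sortA : TRel 1
  | sortB : TRel 1
  | sortT : TRel 1
  | sortL : TRel 1
  | leT : TRel 2
  | leL : TRel 2

/-- The language `L` of the paper (sorts implemented as unary predicates). -/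
def tLang : Language := ⟨TFunc, TRel⟩

/-- Raw interpretation data for an `L`-structure. -/
class TOps (M : Type*) where
  SA : M → Prop
  SB : M → Prop
  ST : M → Prop
  SL : M → Prop
  leT : M → M → Prop
  leL : M → M → Prop
  meet : M → M → M
  app : M → M → M
  predT : M → M
  predL : M → M
  lT : M → M
  lA : M → M
  lB : M → M
  gT : M
  root : M
  gL : M
  zero : M

open TOps

instance tStructure (M : Type*) [TOps M] : tLang.Structure M where
  funMap {_n} f x :=
    match f with
    | .gT => gT
    | .root => root
    | .gL => gL
    | .zero => zero
    | .predT => predT (x 0)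
    | .predL => predL (x 0)
    | .ellT => lT (x 0)
    | .ellA => lA (x 0)
    | .ellB => lB (x 0)
    | .meet => meet (x 0) (x 1)
    | .app => app (x 0) (x 1)
  RelMap {_n} r x :=
    match r with
    | .sortA => SA (x 0)
    | .sortB => SB (x 0)
    | .sortT => ST (x 0)
    | .sortL => SL (x 0)
    | .leT => leT (x 0) (x 1)
    | .leL => leL (x 0) (x 1)

/-- The theory `T` of the paper, given by its (semantically presented) axioms (i)–(viii).
The four sorts partition the universe; all function symbols take the garbage/default
values specified below outside of their intended domains. -/
class TModel (M : Type*) extends TOps M where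
  -- the four sorts partition the universe, and the constants lie in the correct sorts
  sorts_cover : ∀ x : M, SA x ∨ SB x ∨ ST x ∨ SL x
  disj_AB : ∀ x : M, ¬(SA x ∧ SB x)
  disj_AT : ∀ x : M, ¬(SA x ∧ ST x)
  disj_AL : ∀ x : M, ¬(SA x ∧ SL x)
  disj_BT : ∀ x : M, ¬(SB x ∧ ST x)
  disj_BL : ∀ x : M, ¬(SB x ∧ SL x)
  disj_TL : ∀ x : M, ¬(ST x ∧ SL x)
  gT_sort : ST (gT : M)
  root_sort : ST (root : M)
  gL_sort : SL (gL : M)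
  zero_sort : SL (zero : M)
  -- (i) `(L ∖ {g_L}, ≤_L)` is a discrete linear order with least element `0`, no greatest
  -- element, and predecessor function `pred_L`; the garbage point `g_L` is unrelated to
  -- everything and `pred_L (g_L) = g_L`.
  zero_ne_gL : (zero : M) ≠ gL
  leL_dom : ∀ x y : M, leL x y → (SL x ∧ x ≠ gL ∧ SL y ∧ y ≠ gL)
  leL_refl : ∀ x : M, SL x → x ≠ gL → leL x x
  leL_antisymm : ∀ x y : M, leL x y → leL y x → x = y
  leL_trans : ∀ x y z : M, leL x y → leL y z → leL x z
  leL_total : ∀ x y : M, SL x → x ≠ gL → SL y → y ≠ gL → leL x y ∨ leL y x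
  zero_least : ∀ x : M, SL x → x ≠ gL → leL zero x
  leL_no_max : ∀ x : M, SL x → x ≠ gL → ∃ y : M, SL y ∧ y ≠ gL ∧ leL x y ∧ y ≠ x
  predL_zero : predL (zero : M) = zero
  predL_gL : predL (gL : M) = gL
  predL_junk : ∀ x : M, ¬SL x → predL x = gL
  predL_spec : ∀ x : M, SL x → x ≠ gL → x ≠ zero →
    SL (predL x) ∧ predL x ≠ gL ∧ leL (predL x) x ∧ predL x ≠ x ∧
      ∀ y : M, leL y x → y = x ∨ leL y (predL x)
  succL_exists : ∀ x : M, SL x → x ≠ gL →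
    ∃ y : M, SL y ∧ y ≠ gL ∧ y ≠ zero ∧ predL y = x ∧ y ≠ x
  -- (ii) `(T ∖ {g_T}, ≤_T, ⊓)` is a meet-tree with root `r` and binary ramification, in
  -- which the set of predecessors of any element is a discrete linear order with
  -- predecessor function `pred_T`; the garbage point `g_T` is unrelated to everything.
  root_ne_gT : (root : M) ≠ gT
  leT_dom : ∀ x y : M, leT x y → (ST x ∧ x ≠ gT ∧ ST y ∧ y ≠ gT)
  leT_refl : ∀ x : M, ST x → x ≠ gT → leT x x
  leT_antisymm : ∀ x y : M, leT x y → leT y x → x = y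
  leT_trans : ∀ x y z : M, leT x y → leT y z → leT x z
  root_least : ∀ x : M, ST x → x ≠ gT → leT root x
  pred_linear : ∀ x y z : M, leT y x → leT z x → leT y z ∨ leT z y
  meet_spec : ∀ x y : M, ST x → x ≠ gT → ST y → y ≠ gT →
    ST (meet x y) ∧ meet x y ≠ gT ∧ leT (meet x y) x ∧ leT (meet x y) y ∧
      ∀ w : M, leT w x → leT w y → leT w (meet x y)
  meet_junk : ∀ x y : M, ¬(ST x ∧ x ≠ gT ∧ ST y ∧ y ≠ gT) → meet x y = gT
  predT_root : predT (root : M) = root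
  predT_gT : predT (gT : M) = gT
  predT_junk : ∀ x : M, ¬ST x → predT x = gT
  predT_spec : ∀ x : M, ST x → x ≠ gT → x ≠ root →
    ST (predT x) ∧ predT x ≠ gT ∧ leT (predT x) x ∧ predT x ≠ x ∧
      ∀ y : M, leT y x → y = x ∨ leT y (predT x)
  ramification : ∀ x : M, ST x → x ≠ gT →
    ∃ y z : M, y ≠ z ∧ (ST y ∧ y ≠ gT ∧ predT y = x ∧ y ≠ x) ∧
      (ST z ∧ z ≠ gT ∧ predT z = x ∧ z ≠ x) ∧
      ∀ w : M, ST w → w ≠ gT → predT w = x → w ≠ x → w = y ∨ w = z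
  -- (iii) `ℓ_T` is a surjective level function `T ∖ {g_T} → L ∖ {g_L}` which, on the set of
  -- predecessors of any fixed `t`, is an order isomorphism onto an initial segment of
  -- `L ∖ {g_L}`; moreover every element of the tree has extensions to all higher levels.
  lT_gT : lT (gT : M) = gL
  lT_junk : ∀ x : M, ¬ST x → lT x = gL
  lT_sort : ∀ x : M, ST x → x ≠ gT → SL (lT x) ∧ lT x ≠ gL
  lT_surj : ∀ c : M, SL c → c ≠ gL → ∃ x : M, ST x ∧ x ≠ gT ∧ lT x = c
  lT_mono : ∀ t y z : M, leT y t → leT z t → (leT y z ↔ leL (lT y) (lT z))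
  lT_initial : ∀ t c : M, ST t → t ≠ gT → leL c (lT t) → ∃ y : M, leT y t ∧ lT y = c
  lT_ext : ∀ t c : M, ST t → t ≠ gT → leL (lT t) c → ∃ t' : M, leT t t' ∧ lT t' = c
  -- (iv) `g_L` is not in the image of `ℓ_A` nor of `ℓ_B` (on the sorts `A`, `B`)
  lA_sort : ∀ a : M, SA a → SL (lA a) ∧ lA a ≠ gL
  lA_junk : ∀ x : M, ¬SA x → lA x = gL
  lB_sort : ∀ b : M, SB b → SL (lB b) ∧ lB b ≠ gL
  lB_junk : ∀ x : M, ¬SB x → lB x = gL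
  -- (v) all fibers of `ℓ_A` and `ℓ_B` over `L ∖ {g_L}` are infinite
  fiberA_infinite : ∀ c : M, SL c → c ≠ gL → {a : M | SA a ∧ lA a = c}.Infinite
  fiberB_infinite : ∀ c : M, SL c → c ≠ gL → {b : M | SB b ∧ lB b = c}.Infinite
  -- (vi) `f(a,b) = g_T` if and only if `ℓ_A(a) ≠ ℓ_B(b)`
  app_eq_gT_iff : ∀ a b : M, SA a → SB b → (app a b = gT ↔ lA a ≠ lB b)
  app_junk : ∀ a b : M, ¬(SA a ∧ SB b) → app a b = gT
  -- (vii) if `ℓ_A(a) = ℓ_B(b)` then `ℓ_T(f(a,b)) = ℓ_A(a)`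
  app_level : ∀ a b : M, SA a → SB b → lA a = lB b →
    ST (app a b) ∧ lT (app a b) = lA a
  -- (viii) at each level, `f` is a generic surjection
  generic_B : ∀ c : M, SL c → c ≠ gL → ∀ (n : ℕ) (t a : Fin n → M),
    (∀ i, ST (t i) ∧ t i ≠ gT ∧ lT (t i) = c) → (∀ i, SA (a i) ∧ lA (a i) = c) →
    Function.Injective a → {b : M | SB b ∧ ∀ i, app (a i) b = t i}.Infinite
  generic_A : ∀ c : M, SL c → c ≠ gL → ∀ (n : ℕ) (t b : Fin n → M),
    (∀ i, ST (t i) ∧ t i ≠ gT ∧ lT (t i) = c) → (∀ i, SB (b i) ∧ lB (b i) = c) →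
    Function.Injective b → {a : M | SA a ∧ ∀ i, app a (b i) = t i}.Infinite

/-- The theory `T`: the set of `L`-sentences true in every structure satisfying the
axioms (i)–(viii) above. -/
def tTheory : tLang.Theory := {φ : tLang.Sentence | ∀ (M : Type) [TModel M], M ⊨ φ}


/-!
STATEMENT 13: The theory `T` has the independence property (IP): there is an `L`-formula
`φ(v; w)` and, in some model of `T`, tuples `(a_i)_{i ∈ ℕ}` and `(b_S)_{S ⊆ ℕ}` such that
`φ(a_i; b_S)` holds if and only if `i ∈ S`.
-/

/-- There is a formula with the independence property witnessed in the model `M`. -/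
def HasIPWitness (M : Type) [TModel M] : Prop :=
  ∃ (n m : ℕ) (φ : tLang.Formula (Fin n ⊕ Fin m)) (a : ℕ → Fin n → M)
    (b : Set ℕ → Fin m → M),
    ∀ (i : ℕ) (S : Set ℕ), φ.Realize (Sum.elim (a i) (b S)) ↔ i ∈ S

/-!
We build one model of `T` by hand. The tree is the binary tree of finite words ordered by
prefix, with `ℓ_T` the length, and the levels are the natural numbers. Both `A` and `B` consist
of `Point`s: base points `row i` and `col S` of level `1`, with `f(row i, col S) = [i ∈ S]`,
which is the independence pattern; and fresh points, which carry a finite table prescribing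
the values of `f` against finitely many points of the other sort. The value `f(p, q)` is taken
from the data of whichever of `p`, `q` has the larger rank. A fresh point has larger rank than
every key of its table, so its prescriptions always win; together with the tags this gives
infinitely many witnesses for every instance of generic surjectivity.
-/

end BPPaper

namespace List

variable {α : Type*}

open Classical in
/-- The longest common prefix of two lists. -/
noncomputable def commonPrefix (u v : List α) : List α :=
  u.take (Nat.findGreatest (fun k => u.take k = v.take k) u.length)

theorem commonPrefix_prefix_left (u v : List α) : commonPrefix u v <+: u :=
  take_prefix _ _

theorem commonPrefix_prefix_right (u v : List α) : commonPrefix u v <+: v := by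
  classical
  have : u.take _ = v.take _ := Nat.findGreatest_spec (P := fun k => u.take k = v.take k)
    (Nat.zero_le u.length) (by simp)
  rw [commonPrefix, this]
  exact take_prefix _ _

theorem prefix_commonPrefix {w u v : List α} (hu : w <+: u) (hv : w <+: v) :
    w <+: commonPrefix u v := by
  classical
  rw [prefix_iff_eq_take] at hu hv
  have hk : w.length ≤ Nat.findGreatest (fun k => u.take k = v.take k) u.length :=
    Nat.le_findGreatest (by rw [hu]; simp) (hu.symm.trans hv)
  rw [hu]
  exact take_prefix_take_left hk

theorem eq_concat_of_dropLast_eq {u w : List α} (h : w.dropLast = u) (hne : w ≠ u) :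
    ∃ x, w = u ++ [x] := by
  have hw : w ≠ [] := by rintro rfl; exact hne h
  exact ⟨w.getLast hw, by rw [← h, dropLast_concat_getLast]⟩

end List

namespace BPPaper

open TOps

def normalize (c : ℕ) (v : List Bool) : List Bool :=
  if v.length = c then v else List.replicate c false

@[simp] theorem length_normalize (c : ℕ) (v : List Bool) : (normalize c v).length = c := by
  unfold normalize
  split_ifs with h
  exacts [h, List.length_replicate]

theorem normalize_of_length {c : ℕ} {v : List Bool} (h : v.length = c) : normalize c v = v :=
  if_pos h

/-- Points make up both sorts `A` and `B`. The keys of the table of a fresh point are points of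
the other sort; the tag only serves to make infinitely many points with the same table. -/
inductive Point
  | row : ℕ → Point
  | col : Set ℕ → Point
  | fresh (c n : ℕ) (key : Fin n → Point) (val : Fin n → List Bool) (tag : ℕ)

namespace Point

def level : Point → ℕ
  | fresh c .. => c
  | _ => 1

def rank : Point → ℕ
  | fresh _ _ key _ _ => (Finset.univ.sup fun j => (key j).rank) + 1
  | _ => 0

open Classical in
noncomputable def entry : Point → Point → List Bool
  | fresh _ _ key val _, q => Function.extend key val (fun _ => []) q
  | row i, col S => [decide (i ∈ S)]
  | _, _ => []

/-- The word `f(a p, b q)`: it is read off the data of whichever point has the larger rank, and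
replaced by a default word if it does not have the required length `p.level`. -/
noncomputable def cell (p q : Point) : List Bool :=
  normalize p.level (if q.rank ≤ p.rank then p.entry q else q.entry p)

@[simp] theorem length_cell (p q : Point) : (p.cell q).length = p.level :=
  length_normalize _ _

theorem rank_key_lt {c n : ℕ} (key : Fin n → Point) (val : Fin n → List Bool) (tag : ℕ)
    (j : Fin n) : (key j).rank < (fresh c n key val tag).rank :=
  Nat.lt_succ_of_le (Finset.le_sup (f := fun j => (key j).rank) (Finset.mem_univ j))

open Classical in
theorem cell_row_col (i : ℕ) (S : Set ℕ) : cell (row i) (col S) = [decide (i ∈ S)] := by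
  simp [cell, rank, entry, level, normalize]

variable {c n : ℕ} {key : Fin n → Point} {val : Fin n → List Bool}

theorem cell_key_fresh (hkey : key.Injective) (hval : ∀ j, (val j).length = c) (tag : ℕ)
    (j : Fin n) (hj : (key j).level = c) : cell (key j) (fresh c n key val tag) = val j := by
  rw [cell, if_neg (rank_key_lt key val tag j).not_ge, entry, hkey.extend_apply, hj,
    normalize_of_length (hval j)]

theorem cell_fresh_key (hkey : key.Injective) (hval : ∀ j, (val j).length = c) (tag : ℕ)
    (j : Fin n) : cell (fresh c n key val tag) (key j) = val j := by
  rw [cell, if_pos (rank_key_lt key val tag j).le, entry, hkey.extend_apply, level,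
    normalize_of_length (hval j)]

end Point

inductive WordModel
  | a : Point → WordModel
  | b : Point → WordModel
  | t : Option (List Bool) → WordModel
  | l : Option ℕ → WordModel

namespace WordModel

noncomputable instance : TOps WordModel where
  SA x := ∃ p, x = a p
  SB x := ∃ q, x = b q
  ST x := ∃ o, x = t o
  SL x := ∃ o, x = l o
  leT x y := ∃ u v, x = t (some u) ∧ y = t (some v) ∧ u <+: v
  leL x y := ∃ m n, x = l (some m) ∧ y = l (some n) ∧ m ≤ n
  meet
    | t (some u), t (some v) => t (some (List.commonPrefix u v))
    | _, _ => t none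
  app
    | a p, b q => if p.level = q.level then t (some (p.cell q)) else t none
    | _, _ => t none
  predT
    | t (some u) => t (some u.dropLast)
    | _ => t none
  predL
    | l (some n) => l (some (n - 1))
    | _ => l none
  lT
    | t (some u) => l (some u.length)
    | _ => l none
  lA
    | a p => l (some p.level)
    | _ => l none
  lB
    | b q => l (some q.level)
    | _ => l none
  gT := t none
  root := t (some [])
  gL := l none
  zero := l (some 0)

theorem exists_eq_node {x : WordModel} (hx : ST x) (hg : x ≠ gT) : ∃ u, x = t (some u) := by
  obtain ⟨_ | u, rfl⟩ := hx
  exacts [absurd rfl hg, ⟨u, rfl⟩]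

theorem exists_eq_level {x : WordModel} (hx : SL x) (hg : x ≠ gL) : ∃ m, x = l (some m) := by
  obtain ⟨_ | m, rfl⟩ := hx
  exacts [absurd rfl hg, ⟨m, rfl⟩]

theorem exists_eq_node_of_lT {x : WordModel} {m : ℕ} (hx : ST x) (hg : x ≠ gT)
    (hl : lT x = l (some m)) : ∃ u, x = t (some u) ∧ u.length = m := by
  obtain ⟨u, rfl⟩ := exists_eq_node hx hg
  exact ⟨u, rfl, by simpa [TOps.lT] using hl⟩

theorem exists_eq_a_of_lA {x : WordModel} {m : ℕ} (hx : SA x) (hl : lA x = l (some m)) :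
    ∃ p, x = a p ∧ p.level = m := by
  obtain ⟨p, rfl⟩ := hx
  exact ⟨p, rfl, by simpa [TOps.lA] using hl⟩

theorem exists_eq_b_of_lB {x : WordModel} {m : ℕ} (hx : SB x) (hl : lB x = l (some m)) :
    ∃ q, x = b q ∧ q.level = m := by
  obtain ⟨q, rfl⟩ := hx
  exact ⟨q, rfl, by simpa [TOps.lB] using hl⟩

theorem app_a_b {p q : Point} (h : p.level = q.level) : app (a p) (b q) = t (some (p.cell q)) :=
  if_pos h

open Classical in
theorem app_row_col (i : ℕ) (S : Set ℕ) :
    app (a (.row i)) (b (.col S)) = t (some [decide (i ∈ S)]) := by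
  rw [app_a_b (p := .row i) (q := .col S) rfl, Point.cell_row_col]

theorem generic_B (c : WordModel) (hc : SL c) (hg : c ≠ gL) (n : ℕ)
    (ts as : Fin n → WordModel) (hts : ∀ i, ST (ts i) ∧ ts i ≠ gT ∧ lT (ts i) = c)
    (has : ∀ i, SA (as i) ∧ lA (as i) = c)
    (hinj : as.Injective) : {y | SB y ∧ ∀ i, app (as i) y = ts i}.Infinite := by
  obtain ⟨m, rfl⟩ := exists_eq_level hc hg
  choose u hu hlen using fun i => exists_eq_node_of_lT (hts i).1 (hts i).2.1 (hts i).2.2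
  choose α hα hlev using fun i => exists_eq_a_of_lA (has i).1 (has i).2
  obtain rfl : ts = _ := funext hu
  obtain rfl : as = _ := funext hα
  have hα_inj : α.Injective := fun i j h => hinj (congrArg a h)
  refine Set.infinite_of_injective_forall_mem (f := fun k => b (Point.fresh m n α u k))
    (fun k k' h => by simpa using h) fun k => ⟨⟨_, rfl⟩, fun i => ?_⟩
  rw [app_a_b (hlev i), Point.cell_key_fresh hα_inj hlen k i (hlev i)]

theorem generic_A (c : WordModel) (hc : SL c) (hg : c ≠ gL) (n : ℕ)
    (ts bs : Fin n → WordModel) (hts : ∀ i, ST (ts i) ∧ ts i ≠ gT ∧ lT (ts i) = c)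
    (hbs : ∀ i, SB (bs i) ∧ lB (bs i) = c)
    (hinj : bs.Injective) : {x | SA x ∧ ∀ i, app x (bs i) = ts i}.Infinite := by
  obtain ⟨m, rfl⟩ := exists_eq_level hc hg
  choose u hu hlen using fun i => exists_eq_node_of_lT (hts i).1 (hts i).2.1 (hts i).2.2
  choose β hβ hlev using fun i => exists_eq_b_of_lB (hbs i).1 (hbs i).2
  obtain rfl : ts = _ := funext hu
  obtain rfl : bs = _ := funext hβ
  have hβ_inj : β.Injective := fun i j h => hinj (congrArg b h)
  refine Set.infinite_of_injective_forall_mem (f := fun k => a (Point.fresh m n β u k))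
    (fun k k' h => by simpa using h) fun k => ⟨⟨_, rfl⟩, fun i => ?_⟩
  rw [app_a_b (p := Point.fresh m n β u k) (hlev i).symm, Point.cell_fresh_key hβ_inj hlen k i]

noncomputable instance : TModel WordModel where
  sorts_cover
    | a p => Or.inl ⟨p, rfl⟩
    | b q => Or.inr (Or.inl ⟨q, rfl⟩)
    | t o => Or.inr (Or.inr (Or.inl ⟨o, rfl⟩))
    | l o => Or.inr (Or.inr (Or.inr ⟨o, rfl⟩))
  disj_AB := by rintro _ ⟨⟨p, rfl⟩, ⟨q, ⟨⟩⟩⟩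
  disj_AT := by rintro _ ⟨⟨p, rfl⟩, ⟨q, ⟨⟩⟩⟩
  disj_AL := by rintro _ ⟨⟨p, rfl⟩, ⟨q, ⟨⟩⟩⟩
  disj_BT := by rintro _ ⟨⟨p, rfl⟩, ⟨q, ⟨⟩⟩⟩
  disj_BL := by rintro _ ⟨⟨p, rfl⟩, ⟨q, ⟨⟩⟩⟩
  disj_TL := by rintro _ ⟨⟨p, rfl⟩, ⟨q, ⟨⟩⟩⟩
  gT_sort := ⟨_, rfl⟩
  root_sort := ⟨_, rfl⟩
  gL_sort := ⟨_, rfl⟩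
  zero_sort := ⟨_, rfl⟩
  zero_ne_gL := nofun
  leL_dom := by
    rintro _ _ ⟨m, n, rfl, rfl, -⟩
    exact ⟨⟨_, rfl⟩, nofun, ⟨_, rfl⟩, nofun⟩
  leL_refl x hx hg := by
    obtain ⟨m, rfl⟩ := exists_eq_level hx hg
    exact ⟨m, m, rfl, rfl, le_rfl⟩
  leL_antisymm := by
    rintro _ _ ⟨m, n, rfl, rfl, h⟩ ⟨_, _, ⟨⟩, ⟨⟩, h'⟩
    rw [le_antisymm h h']
  leL_trans := by
    rintro _ _ _ ⟨m, n, rfl, rfl, h⟩ ⟨_, k, ⟨⟩, rfl, h'⟩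
    exact ⟨m, k, rfl, rfl, h.trans h'⟩
  leL_total x y hx hgx hy hgy := by
    obtain ⟨m, rfl⟩ := exists_eq_level hx hgx
    obtain ⟨n, rfl⟩ := exists_eq_level hy hgy
    exact (le_total m n).imp (⟨m, n, rfl, rfl, ·⟩) (⟨n, m, rfl, rfl, ·⟩)
  zero_least x hx hg := by
    obtain ⟨m, rfl⟩ := exists_eq_level hx hg
    exact ⟨0, m, rfl, rfl, m.zero_le⟩
  leL_no_max x hx hg := by
    obtain ⟨m, rfl⟩ := exists_eq_level hx hg
    exact ⟨l (some (m + 1)), ⟨_, rfl⟩, nofun, ⟨m, m + 1, rfl, rfl, by omega⟩, by simp⟩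
  predL_zero := rfl
  predL_gL := rfl
  predL_junk x hx := by cases x <;> first | rfl | exact absurd ⟨_, rfl⟩ hx
  predL_spec x hx hg h0 := by
    obtain ⟨m, rfl⟩ := exists_eq_level hx hg
    have hm : m ≠ 0 := by rintro rfl; exact h0 rfl
    refine ⟨⟨_, rfl⟩, nofun, ⟨m - 1, m, rfl, rfl, by omega⟩,
      by simp only [predL, ne_eq, l.injEq, Option.some.injEq]; omega, ?_⟩
    rintro _ ⟨k, _, rfl, ⟨⟩, hk⟩
    rcases eq_or_ne k m with rfl | hne
    exacts [Or.inl rfl, Or.inr ⟨k, m - 1, rfl, rfl, by omega⟩]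
  succL_exists x hx hg := by
    obtain ⟨m, rfl⟩ := exists_eq_level hx hg
    exact ⟨l (some (m + 1)), ⟨_, rfl⟩, nofun, by simp [TOps.zero], rfl, by simp⟩
  root_ne_gT := nofun
  leT_dom := by
    rintro _ _ ⟨u, v, rfl, rfl, -⟩
    exact ⟨⟨_, rfl⟩, nofun, ⟨_, rfl⟩, nofun⟩
  leT_refl x hx hg := by
    obtain ⟨u, rfl⟩ := exists_eq_node hx hg
    exact ⟨u, u, rfl, rfl, u.prefix_refl⟩
  leT_antisymm := by
    rintro _ _ ⟨u, v, rfl, rfl, h⟩ ⟨_, _, ⟨⟩, ⟨⟩, h'⟩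
    rw [h.eq_of_length (h.length_le.antisymm h'.length_le)]
  leT_trans := by
    rintro _ _ _ ⟨u, v, rfl, rfl, h⟩ ⟨_, w, ⟨⟩, rfl, h'⟩
    exact ⟨u, w, rfl, rfl, h.trans h'⟩
  root_least x hx hg := by
    obtain ⟨u, rfl⟩ := exists_eq_node hx hg
    exact ⟨[], u, rfl, rfl, List.nil_prefix⟩
  pred_linear := by
    rintro _ _ _ ⟨u, w, rfl, rfl, hu⟩ ⟨v, _, rfl, ⟨⟩, hv⟩
    exact (List.prefix_or_prefix_of_prefix hu hv).imp
      (⟨u, v, rfl, rfl, ·⟩) (⟨v, u, rfl, rfl, ·⟩)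
  meet_spec x y hx hgx hy hgy := by
    obtain ⟨u, rfl⟩ := exists_eq_node hx hgx
    obtain ⟨v, rfl⟩ := exists_eq_node hy hgy
    refine ⟨⟨_, rfl⟩, nofun, ⟨_, u, rfl, rfl, u.commonPrefix_prefix_left v⟩,
      ⟨_, v, rfl, rfl, u.commonPrefix_prefix_right v⟩, ?_⟩
    rintro _ ⟨w, _, rfl, ⟨⟩, hu⟩ ⟨_, _, ⟨⟩, ⟨⟩, hv⟩
    exact ⟨w, _, rfl, rfl, List.prefix_commonPrefix hu hv⟩
  meet_junk x y h := by
    rcases x with _ | _ | (_ | u) | _ <;> rcases y with _ | _ | (_ | v) | _ <;> try rfl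
    exact absurd ⟨⟨_, rfl⟩, nofun, ⟨_, rfl⟩, nofun⟩ h
  predT_root := rfl
  predT_gT := rfl
  predT_junk x hx := by cases x <;> first | rfl | exact absurd ⟨_, rfl⟩ hx
  predT_spec x hx hg hr := by
    obtain ⟨u, rfl⟩ := exists_eq_node hx hg
    have hu : u ≠ [] := by rintro rfl; exact hr rfl
    have hlen : u.length ≠ 0 := by simpa using hu
    refine ⟨⟨_, rfl⟩, nofun, ⟨_, u, rfl, rfl, u.dropLast_prefix⟩, ?_, ?_⟩
    · intro h
      have := congrArg (fun x => lT x) h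
      simp only [lT, predT, List.length_dropLast, l.injEq, Option.some.injEq] at this
      omega
    · rintro _ ⟨w, _, rfl, ⟨⟩, hw⟩
      rw [← u.dropLast_concat_getLast hu, List.prefix_concat_iff] at hw
      rcases hw with hw | hw
      · rw [hw, u.dropLast_concat_getLast hu]; exact Or.inl rfl
      · exact Or.inr ⟨w, _, rfl, rfl, hw⟩
  ramification x hx hg := by
    obtain ⟨u, rfl⟩ := exists_eq_node hx hg
    refine ⟨t (some (u ++ [true])), t (some (u ++ [false])), by simp,
      ⟨⟨_, rfl⟩, nofun, by simp [TOps.predT], by simp⟩,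
      ⟨⟨_, rfl⟩, nofun, by simp [TOps.predT], by simp⟩, ?_⟩
    intro w hw hgw hpred hne
    obtain ⟨w, rfl⟩ := exists_eq_node hw hgw
    obtain ⟨_ | _, rfl⟩ := List.eq_concat_of_dropLast_eq (u := u) (w := w)
      (by simpa [TOps.predT] using hpred) (by rintro rfl; exact hne rfl)
    exacts [Or.inr rfl, Or.inl rfl]
  lT_gT := rfl
  lT_junk x hx := by cases x <;> first | rfl | exact absurd ⟨_, rfl⟩ hx
  lT_sort x hx hg := by
    obtain ⟨u, rfl⟩ := exists_eq_node hx hg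
    exact ⟨⟨_, rfl⟩, nofun⟩
  lT_surj c hc hg := by
    obtain ⟨m, rfl⟩ := exists_eq_level hc hg
    exact ⟨t (some (List.replicate m false)), ⟨_, rfl⟩, nofun, by simp [TOps.lT]⟩
  lT_mono := by
    rintro _ _ _ ⟨u, w, rfl, rfl, hu⟩ ⟨v, _, rfl, ⟨⟩, hv⟩
    constructor
    · rintro ⟨_, _, ⟨⟩, ⟨⟩, h⟩
      exact ⟨_, _, rfl, rfl, h.length_le⟩
    · rintro ⟨_, _, ⟨⟩, ⟨⟩, h⟩
      exact ⟨_, _, rfl, rfl, List.prefix_of_prefix_length_le hu hv h⟩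
  lT_initial x c hx hg := by
    obtain ⟨u, rfl⟩ := exists_eq_node hx hg
    rintro ⟨k, _, rfl, ⟨⟩, hk⟩
    exact ⟨t (some (u.take k)), ⟨_, _, rfl, rfl, u.take_prefix k⟩,
      by simpa [TOps.lT] using hk⟩
  lT_ext x c hx hg := by
    obtain ⟨u, rfl⟩ := exists_eq_node hx hg
    rintro ⟨_, k, ⟨⟩, rfl, hk⟩
    refine ⟨t (some (u ++ List.replicate (k - u.length) false)),
      ⟨_, _, rfl, rfl, u.prefix_append _⟩, ?_⟩
    simp only [lT, List.length_append, List.length_replicate, l.injEq, Option.some.injEq]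
    omega
  lA_sort := by rintro _ ⟨p, rfl⟩; exact ⟨⟨_, rfl⟩, nofun⟩
  lA_junk x hx := by cases x <;> first | rfl | exact absurd ⟨_, rfl⟩ hx
  lB_sort := by rintro _ ⟨q, rfl⟩; exact ⟨⟨_, rfl⟩, nofun⟩
  lB_junk x hx := by cases x <;> first | rfl | exact absurd ⟨_, rfl⟩ hx
  fiberA_infinite c hc hg := by
    obtain ⟨m, rfl⟩ := exists_eq_level hc hg
    exact Set.infinite_of_injective_forall_mem (f := fun k => a (.fresh m 0 Fin.elim0 Fin.elim0 k))
      (fun k k' h => by simpa using h) fun k => ⟨⟨_, rfl⟩, rfl⟩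
  fiberB_infinite c hc hg := by
    obtain ⟨m, rfl⟩ := exists_eq_level hc hg
    exact Set.infinite_of_injective_forall_mem (f := fun k => b (.fresh m 0 Fin.elim0 Fin.elim0 k))
      (fun k k' h => by simpa using h) fun k => ⟨⟨_, rfl⟩, rfl⟩
  app_eq_gT_iff := by
    rintro _ _ ⟨p, rfl⟩ ⟨q, rfl⟩
    by_cases h : p.level = q.level <;> simp [TOps.app, TOps.lA, TOps.lB, TOps.gT, h]
  app_junk x y h := by
    rcases x with p | _ | _ | _ <;> rcases y with _ | q | _ | _ <;>
      first | rfl | exact absurd ⟨⟨p, rfl⟩, ⟨q, rfl⟩⟩ h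
  app_level := by
    rintro _ _ ⟨p, rfl⟩ ⟨q, rfl⟩ h
    have h : p.level = q.level := by simpa [TOps.lA, TOps.lB] using h
    rw [app_a_b h]
    exact ⟨⟨_, rfl⟩, by simp [TOps.lT, TOps.lA]⟩
  generic_B := generic_B
  generic_A := generic_A

end WordModel

theorem hasIPWitness_of_app {M : Type} [TModel M] (a : ℕ → M) (b : Set ℕ → M) (t₀ : M)
    (h : ∀ i S, app (a i) (b S) = t₀ ↔ i ∈ S) : HasIPWitness M :=
  ⟨1, 2, Term.equal (Term.func TFunc.app ![Term.var (Sum.inl 0), Term.var (Sum.inr 0)])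
    (Term.var (Sum.inr 1)), fun i _ => a i, fun S => ![b S, t₀], h⟩

/-- **`T` has the independence property.** -/
theorem tTheory_has_IP : ∃ (M : Type) (inst : TModel M), @HasIPWitness M inst := by
  refine ⟨WordModel, inferInstance, hasIPWitness_of_app (fun i => .a (.row i))
    (fun S => .b (.col S)) (.t (some [true])) fun i S => ?_⟩
  rw [WordModel.app_row_col]
  simp

end BPPaper
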